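/- Let M be a finite influence model with functional serial relation R_p. Agent i is stable for issue p under the BDP dynamics (its opinion on p never changes) if and only if all agents reachable from i via the reflexive-transitive closure of R_p (i's direct and indirect influencers) hold the same opinion on p as i. -/
import Mathlib


/-- One step of the (single-issue) Boolean DeGroot process. -/
def bstep {N : Type*} (f : N → N) (O : N → Bool) : N → Bool := fun i => O (f i)

lemma bstep_iter {N : Type*} (r : N → N) (O : N → Bool) (i : N) :
    ∀ n : ℕ, ((bstep r)^[n] O) i = O (r^[n] i) := by
  intro n
  induction n generalizing O i with
  | zero => rfl
  | succ n ih =>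
    rw [Function.iterate_succ_apply, Function.iterate_succ_apply']
    exact ih (bstep r O) i

lemma reach_iff {N : Type*} (r : N → N) (i j : N) :
    Relation.ReflTransGen (fun a b => r a = b) i j ↔ ∃ n : ℕ, r^[n] i = j := by
  constructor
  · intro h
    induction h with
    | refl => exact ⟨0, rfl⟩
    | tail _ hbc ih =>
      obtain ⟨n, hn⟩ := ih
      exact ⟨n + 1, by rw [Function.iterate_succ_apply', hn, hbc]⟩
  · rintro ⟨n, rfl⟩
    induction n with
    | zero => exact Relation.ReflTransGen.refl
    | succ n ih =>
      rw [Function.iterate_succ_apply']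
      exact ih.tail rfl

/-- Agent `i` is stable for an issue (its opinion never changes) iff all its direct
and indirect influencers (nodes reachable via the reflexive-transitive closure of
the influence relation) hold the same opinion as `i`. -/
theorem stmt18 {N : Type*} [Fintype N] (r : N → N) (O : N → Bool) (i : N) :
    (∀ n : ℕ, ((bstep r)^[n] O) i = O i) ↔
      ∀ j, Relation.ReflTransGen (fun a b => r a = b) i j → O j = O i := by
  constructor
  · intro h j hj
    obtain ⟨n, rfl⟩ := (reach_iff r i j).1 hj
    rw [← bstep_iter r O i n]; exact h n
  · intro h n
    rw [bstep_iter]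
    exact h _ ((reach_iff r i _).2 ⟨n, rfl⟩)
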